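/- arXiv:2310.11288 — 2 statements merged into one kernel-verified Lean document; each statement's English description precedes it below -/
import Mathlib

section
/- For any monad T on Set, the Eilenberg-Moore category Set^T has all colimits. -/
open CategoryTheory Limits

universe u

namespace EMColimAux

variable {T : Monad (Type u)}

/-- The solution set condition for the constant-diagram functor on the Eilenberg-Moore
category of a monad on `Type u`.  This is the heart of the proof that `T.Algebra` is
cocomplete: any cocone over a diagram `A` factors through an algebra generated by the images
of the cocone legs, and such an algebra has cardinality bounded by `T.obj (Σ j, (A.obj j).A)`. -/
theorem solutionSet (T : Monad (Type u)) (J : Type u) [Category.{u} J] :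
    SolutionSetCondition.{u} (Functor.const J : T.Algebra ⥤ (J ⥤ T.Algebra)) := by
  classical
  intro A
  refine ⟨Σ s : Set (T.obj (Σ j : J, (A.obj j).A)),
      Σ' (a : (T : Type u ⥤ Type u).obj ↥s ⟶ ↥s)
        (h1 : T.η.app ↥s ≫ a = 𝟙 ↥s)
        (h2 : T.μ.app ↥s ≫ a = (T : Type u ⥤ Type u).map a ≫ a),
      (A ⟶ (Functor.const J).obj (⟨↥s, a, h1, h2⟩ : T.Algebra)),
    fun i => ⟨↥i.1, i.2.1, i.2.2.1, i.2.2.2.1⟩,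
    fun i => i.2.2.2.2, ?_⟩
  intro X h
  -- the "set of generators": the union of the images of the cocone legs
  let π : (Σ j : J, (A.obj j).A) → X.A := fun p => (h.app p.1).f p.2
  let S : Set X.A := Set.range π
  let inclS : ↥S ⟶ X.A := ↾Subtype.val
  -- the subalgebra generated by `S`
  let Y : Set X.A := Set.range (T.toFunctor.map inclS ≫ X.a)
  let inclY : ↥Y ⟶ X.A := ↾Subtype.val
  have hSY' : T.η.app ↥S ≫ (T.toFunctor.map inclS ≫ X.a) = inclS := by
    rw [← Category.assoc, ← T.η.naturality inclS, Category.assoc, X.unit]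
    simp
  have hSY : ∀ x ∈ S, x ∈ Y := fun x hx =>
    ⟨T.η.app ↥S ⟨x, hx⟩, types_congr_hom hSY' ⟨x, hx⟩⟩
  -- the canonical surjection `T ↥S → ↥Y` and a section of it
  let pY : T.obj ↥S → ↥Y := fun t => ⟨X.a (T.toFunctor.map inclS t), ⟨t, rfl⟩⟩
  have hpY : Function.Surjective pY := by
    rintro ⟨y, t, ht⟩
    exact ⟨t, Subtype.ext ht⟩
  let q : (↥Y ⟶ T.obj ↥S) := ↾(Function.surjInv hpY)
  have hq : ∀ y, pY (q y) = y := fun y => Function.surjInv_eq hpY y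
  have hinclY : inclY = (q ≫ (T.toFunctor.map inclS ≫ X.a) : ↥Y ⟶ X.A) :=
    ConcreteCategory.hom_ext _ _ fun y => (congrArg Subtype.val (hq y)).symm
  -- `Y` is closed under the algebra operation (morphism-level statement)
  have hclosed : T.toFunctor.map inclY ≫ X.a
      = T.toFunctor.map q ≫ T.μ.app ↥S ≫ (T.toFunctor.map inclS ≫ X.a) := by
    conv_lhs => rw [hinclY]
    rw [T.toFunctor.map_comp, T.toFunctor.map_comp, Category.assoc, Category.assoc,
      ← X.assoc]
    have := T.μ.naturality inclS
    simp only [Functor.comp_map] at this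
    rw [← Category.assoc (T.toFunctor.map (T.toFunctor.map inclS)), this]
    simp [Category.assoc]
  have hclosed' : ∀ t : T.obj ↥Y, X.a (T.toFunctor.map inclY t) ∈ Y := fun t => by
    rw [show X.a (T.toFunctor.map inclY t) = (T.toFunctor.map inclY ≫ X.a) t from rfl,
      hclosed]
    exact ⟨_, rfl⟩
  -- the subalgebra `Ya` on carrier `↥Y`
  let aY : T.obj ↥Y ⟶ ↥Y := ↾fun t => ⟨X.a (T.toFunctor.map inclY t), hclosed' t⟩
  have haY : (aY ≫ inclY : T.obj ↥Y ⟶ X.A) = T.toFunctor.map inclY ≫ X.a := rfl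
  have unitY' : T.η.app ↥Y ≫ (T.toFunctor.map inclY ≫ X.a) = inclY := by
    rw [← Category.assoc, ← T.η.naturality inclY, Category.assoc, X.unit]
    simp
  have unitY : T.η.app ↥Y ≫ aY = 𝟙 ↥Y := by
    refine ConcreteCategory.hom_ext _ _ fun y => ?_
    apply Subtype.ext
    exact types_congr_hom unitY' y
  have assocY : T.μ.app ↥Y ≫ aY = T.toFunctor.map aY ≫ aY := by
    have : (T.μ.app ↥Y ≫ aY) ≫ inclY = (T.toFunctor.map aY ≫ aY) ≫ inclY := by
      rw [Category.assoc, Category.assoc, haY]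
      -- LHS : μ ≫ T.map inclY ≫ X.a ; RHS : T.map aY ≫ T.map inclY ≫ X.a
      have hnat := T.μ.naturality inclY
      simp only [Functor.comp_map] at hnat
      conv_lhs => rw [← Category.assoc, ← hnat, Category.assoc, X.assoc,
        ← Category.assoc, ← T.toFunctor.map_comp, ← haY,
        T.toFunctor.map_comp, Category.assoc]
    refine ConcreteCategory.hom_ext _ _ fun t => ?_
    apply Subtype.ext
    exact types_congr_hom this t
  let Ya : T.Algebra := ⟨↥Y, aY, unitY, assocY⟩
  -- an injection of `↥Y` into `T.obj (Σ j, (A.obj j).A)`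
  let m : (Σ j : J, (A.obj j).A) ⟶ ↥S := ↾fun p => ⟨π p, ⟨p, rfl⟩⟩
  have hm : Function.Surjective m := by
    rintro ⟨x, p, hp⟩
    exact ⟨p, Subtype.ext hp⟩
  let s0 : (↥S ⟶ (Σ j : J, (A.obj j).A)) := ↾(Function.surjInv hm)
  have hs0 : (s0 ≫ m : ↥S ⟶ ↥S) = 𝟙 ↥S := ConcreteCategory.hom_ext _ _ fun x => Function.surjInv_eq hm x
  have hsm : T.toFunctor.map s0 ≫ T.toFunctor.map m = 𝟙 _ := by
    rw [← T.toFunctor.map_comp, hs0, T.toFunctor.map_id]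
  have hs0inj : Function.Injective (T.toFunctor.map s0) :=
    Function.LeftInverse.injective (g := T.toFunctor.map m) (fun z => types_congr_hom hsm z)
  have hqinj : Function.Injective q := by
    intro y1 y2 hy
    rw [← hq y1, ← hq y2, hy]
  let e : ↥Y → T.obj (Σ j : J, (A.obj j).A) := fun y => T.toFunctor.map s0 (q y)
  have he : Function.Injective e := hs0inj.comp hqinj
  let s : Set (T.obj (Σ j : J, (A.obj j).A)) := Set.range e
  let eqv : ↥Y ≃ ↥s := Equiv.ofInjective e he
  let f1 : (↥s ⟶ ↥Y) := ↾fun z => eqv.symm z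
  let f2 : (↥Y ⟶ ↥s) := ↾fun y => eqv y
  have hf21 : (f2 ≫ f1 : ↥Y ⟶ ↥Y) = 𝟙 ↥Y := ConcreteCategory.hom_ext _ _ fun y => eqv.symm_apply_apply y
  have hf12 : (f1 ≫ f2 : ↥s ⟶ ↥s) = 𝟙 ↥s := ConcreteCategory.hom_ext _ _ fun z => eqv.apply_symm_apply z
  -- transport the algebra structure along the bijection
  let aB : T.obj ↥s ⟶ ↥s := T.toFunctor.map f1 ≫ aY ≫ f2
  have unitB : T.η.app ↥s ≫ aB = 𝟙 ↥s := by
    show T.η.app ↥s ≫ T.toFunctor.map f1 ≫ aY ≫ f2 = 𝟙 ↥s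
    rw [← Category.assoc, ← T.η.naturality f1]
    show f1 ≫ (T.η.app ↥Y ≫ aY) ≫ f2 = 𝟙 ↥s
    rw [unitY, Category.id_comp, hf12]
  have assocB : T.μ.app ↥s ≫ aB = T.toFunctor.map aB ≫ aB := by
    show T.μ.app ↥s ≫ T.toFunctor.map f1 ≫ aY ≫ f2
        = T.toFunctor.map (T.toFunctor.map f1 ≫ aY ≫ f2) ≫ T.toFunctor.map f1 ≫ aY ≫ f2
    have hnat := T.μ.naturality f1
    simp only [Functor.comp_map] at hnat
    conv_lhs => rw [← Category.assoc, ← hnat, Category.assoc,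
      ← Category.assoc (T.μ.app ↥Y) aY f2, assocY]
    conv_rhs => rw [T.toFunctor.map_comp, T.toFunctor.map_comp]
    simp only [Category.assoc]
    conv_rhs => rw [← Category.assoc (T.toFunctor.map f2) (T.toFunctor.map f1),
      ← T.toFunctor.map_comp, hf21, T.toFunctor.map_id, Category.id_comp]
  let B : T.Algebra := ⟨↥s, aB, unitB, assocB⟩
  -- the algebra homs relating `Ya`, `B` and `X`
  let gY : Ya ⟶ X := ⟨inclY, haY.symm⟩
  let kY : Ya ⟶ B := by
    refine ⟨f2, ?_⟩
    show T.toFunctor.map f2 ≫ T.toFunctor.map f1 ≫ aY ≫ f2 = aY ≫ f2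
    rw [← Category.assoc, ← T.toFunctor.map_comp, hf21, T.toFunctor.map_id, Category.id_comp]
  let kB : B ⟶ Ya := by
    refine ⟨f1, ?_⟩
    show T.toFunctor.map f1 ≫ aY = (T.toFunctor.map f1 ≫ aY ≫ f2) ≫ f1
    simp only [Category.assoc]
    rw [hf21, Category.comp_id]
  -- the factored cocone with vertex `Ya`
  let w : ∀ j : J, (A.obj j).A ⟶ ↥Y := fun j => ↾fun x => ⟨(h.app j).f x, hSY _ ⟨⟨j, x⟩, rfl⟩⟩
  have hw : ∀ j, (w j ≫ inclY : (A.obj j).A ⟶ X.A) = (h.app j).f := fun j => rfl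
  let wHom : ∀ j : J, A.obj j ⟶ Ya := fun j => by
    refine ⟨w j, ?_⟩
    have hj := (h.app j).h
    simp only [Functor.const_obj_obj] at hj
    have : (T.toFunctor.map (w j) ≫ aY) ≫ inclY = ((A.obj j).a ≫ w j) ≫ inclY := by
      rw [Category.assoc, haY, ← Category.assoc, ← T.toFunctor.map_comp, hw,
        Category.assoc, hw, hj]
    refine ConcreteCategory.hom_ext _ _ fun t => ?_
    apply Subtype.ext
    exact types_congr_hom this t
  let hYa : A ⟶ (Functor.const J).obj Ya := by
    refine ⟨wHom, ?_⟩
    intro j j' φ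
    apply Monad.Algebra.Hom.ext
    refine ConcreteCategory.hom_ext _ _ fun x => ?_
    apply Subtype.ext
    show (h.app j').f ((A.map φ).f x) = (h.app j).f x
    have hn := h.naturality φ
    simp only [Functor.const_obj_map, Category.comp_id] at hn
    exact types_congr_hom (congrArg Monad.Algebra.Hom.f hn) x
  refine ⟨⟨s, aB, unitB, assocB, hYa ≫ (Functor.const J).map kY⟩, kB ≫ gY, ?_⟩
  -- the factorization
  show (hYa ≫ (Functor.const J).map kY) ≫ (Functor.const J).map (kB ≫ gY) = h
  rw [Category.assoc, ← Functor.map_comp]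
  have : (kY ≫ kB ≫ gY : Ya ⟶ X) = gY := by
    apply Monad.Algebra.Hom.ext
    show f2 ≫ f1 ≫ inclY = inclY
    rw [← Category.assoc, hf21, Category.id_comp]
  rw [this]
  apply NatTrans.ext
  funext j
  apply Monad.Algebra.Hom.ext
  rfl

end EMColimAux

/-- For any monad `T` on `Set`, the Eilenberg-Moore category of `T`-algebras has all
colimits. -/
theorem eilenbergMoore_hasColimits (T : Monad (Type u)) :
    Limits.HasColimits (Monad.Algebra T) := by
  have : HasLimits T.Algebra := hasLimits_of_hasLimits_createsLimits (Monad.forget T)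
  constructor
  intro J _
  rw [hasColimitsOfShape_iff_isRightAdjoint_const]
  exact isRightAdjoint_of_preservesLimits_of_solutionSetCondition _
    (EMColimAux.solutionSet T J)
end

section
/- Let T be a monoidal monad on a monoidal category C. For objects A, B of C, the free algebras satisfy F(A) ⊗^T F(B) ≅ F(A ⊗ B), where ⊗^T is the tensor product of T-algebras defined as the reflexive coequalizer of F(a ⊗ b) and μ ∘ F(∇) : F(T(A) ⊗ T(B)) ⇉ F(A ⊗ B). -/
open CategoryTheory CategoryTheory.Limits MonoidalCategory

universe v u

/-- Let `T` be a monoidal monad on a monoidal category `C` (with monoidal structure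
`∇ : T A ⊗ T B ⟶ T (A ⊗ B)` compatible with `η` and `μ`).  For objects `A B : C`,
the free algebras satisfy `F(A) ⊗^T F(B) ≅ F(A ⊗ B)`: the tensor product of the
free algebras, defined as the reflexive coequalizer of
`F(μ_A ⊗ μ_B), μ·F(∇) : F(T T A ⊗ T T B) ⇉ F(T A ⊗ T B)`, is exhibited by the map
`μ·F(∇) : F(T A ⊗ T B) ⟶ F(A ⊗ B)`, i.e. the corresponding cofork is a colimit. -/
theorem freeAlgebra_tensor_iso_free_of_tensor {C : Type u} [Category.{v} C]
    [MonoidalCategory C] (T : Monad C)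
    (nabla : ∀ A B : C, T.obj A ⊗ T.obj B ⟶ T.obj (A ⊗ B))
    (hnat : ∀ {A A' B B' : C} (f : A ⟶ A') (g : B ⟶ B'),
      (T.map f ⊗ₘ T.map g) ≫ nabla A' B' = nabla A B ≫ T.map (f ⊗ₘ g))
    (hη : ∀ A B : C, (T.η.app A ⊗ₘ T.η.app B) ≫ nabla A B = T.η.app (A ⊗ B))
    (hμ : ∀ A B : C, (T.μ.app A ⊗ₘ T.μ.app B) ≫ nabla A B =
      nabla (T.obj A) (T.obj B) ≫ T.map (nabla A B) ≫ T.μ.app (A ⊗ B))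
    (A B : C) :
    ∃ (w : T.free.map (T.μ.app A ⊗ₘ T.μ.app B) ≫
          (T.free.map (nabla A B) ≫ T.adj.counit.app (T.free.obj (A ⊗ B))) =
        (T.free.map (nabla (T.obj A) (T.obj B)) ≫
            T.adj.counit.app (T.free.obj (T.obj A ⊗ T.obj B))) ≫
          (T.free.map (nabla A B) ≫ T.adj.counit.app (T.free.obj (A ⊗ B)))),
      Nonempty (IsColimit (Cofork.ofπ
        (T.free.map (nabla A B) ≫ T.adj.counit.app (T.free.obj (A ⊗ B))) w)) := by
  have hc : ∀ X : C, (T.adj.counit.app (T.free.obj X)).f = T.μ.app X := by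
    intro X; simp [Monad.adj]
    exact Category.id_comp _
  -- the two parallel maps and the projection
  set f₁ : T.free.obj (T.obj (T.obj A) ⊗ T.obj (T.obj B)) ⟶ T.free.obj (T.obj A ⊗ T.obj B) :=
    T.free.map (T.μ.app A ⊗ₘ T.μ.app B) with hf₁
  set f₂ : T.free.obj (T.obj (T.obj A) ⊗ T.obj (T.obj B)) ⟶ T.free.obj (T.obj A ⊗ T.obj B) :=
    T.free.map (nabla (T.obj A) (T.obj B)) ≫
      T.adj.counit.app (T.free.obj (T.obj A ⊗ T.obj B)) with hf₂
  set π : T.free.obj (T.obj A ⊗ T.obj B) ⟶ T.free.obj (A ⊗ B) :=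
    T.free.map (nabla A B) ≫ T.adj.counit.app (T.free.obj (A ⊗ B)) with hπ
  have w : f₁ ≫ π = f₂ ≫ π := by
    simp only [hf₁, hf₂, hπ]
    ext
    dsimp
    erw [Monad.Algebra.comp_f, Monad.Algebra.comp_f]
    simp only [hc]
    change T.map (T.μ.app A ⊗ₘ T.μ.app B) ≫ T.map (nabla A B) ≫ T.μ.app (A ⊗ B) =
      (T.map (nabla (T.obj A) (T.obj B)) ≫ T.μ.app (T.obj A ⊗ T.obj B)) ≫
        T.map (nabla A B) ≫ T.μ.app (A ⊗ B)
    rw [← Functor.map_comp_assoc, hμ]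
    simp only [Functor.map_comp, Category.assoc, Monad.assoc]
    have hn := T.μ.naturality (nabla A B)
    dsimp at hn
    rw [reassoc_of% hn]
  -- the section of π
  have hsπ : T.free.map (T.η.app A ⊗ₘ T.η.app B) ≫ π = 𝟙 _ := by
    simp only [hπ]
    ext
    dsimp
    erw [Monad.Algebra.comp_f]
    simp only [hc]
    change T.map (T.η.app A ⊗ₘ T.η.app B) ≫ T.map (nabla A B) ≫ T.μ.app (A ⊗ B) =
      𝟙 (T.obj (A ⊗ B))
    rw [← Functor.map_comp_assoc, hη]
    simp
  -- π composed with the section, rewritten through f₂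
  have hπs : π ≫ T.free.map (T.η.app A ⊗ₘ T.η.app B) =
      T.free.map (T.map (T.η.app A) ⊗ₘ T.map (T.η.app B)) ≫ f₂ := by
    simp only [hπ, hf₂]
    ext
    dsimp
    erw [Monad.Algebra.comp_f, Monad.Algebra.comp_f]
    simp only [hc]
    change (T.map (nabla A B) ≫ T.μ.app (A ⊗ B)) ≫ T.map (T.η.app A ⊗ₘ T.η.app B) =
      T.map (T.map (T.η.app A) ⊗ₘ T.map (T.η.app B)) ≫ T.map (nabla (T.obj A) (T.obj B)) ≫
        T.μ.app (T.obj A ⊗ T.obj B)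
    have hn := T.μ.naturality (T.η.app A ⊗ₘ T.η.app B)
    dsimp at hn
    rw [Category.assoc, ← hn, ← Functor.map_comp_assoc, ← hnat, Functor.map_comp_assoc]
  have hts : T.free.map (T.map (T.η.app A) ⊗ₘ T.map (T.η.app B)) ≫ f₁ = 𝟙 _ := by
    simp only [hf₁]
    rw [← Functor.map_comp, tensorHom_comp_tensorHom, Monad.right_unit, Monad.right_unit, id_tensorHom_id]
    simp
  refine ⟨w, ⟨Cofork.IsColimit.mk _
    (fun s => T.free.map (T.η.app A ⊗ₘ T.η.app B) ≫ s.π) (fun s => ?_) (fun s m hm => ?_)⟩⟩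
  · have hπ' : (Cofork.ofπ π w).π = π := rfl
    rw [hπ', ← Category.assoc, hπs, Category.assoc, ← s.condition, ← Category.assoc,
      hts]
    simp
  · have hπ' : (Cofork.ofπ π w).π = π := rfl
    rw [hπ'] at hm
    rw [← hm, ← Category.assoc, hsπ]
    simp
end
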